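/- Let X be a discrete topological space, let η > 0, and let d ∈ Met(X). Then there exists a metric e ∈ Met(X) such that sup_{x,y∈X} |d(x,y) − e(x,y)| ≤ η, and for all distinct x, y ∈ X the value e(x,y) lies in η·ℤ≥0 = {η·n : n ∈ ℤ, n ≥ 0} and satisfies η ≤ e(x,y). -/

import Mathlib

/-!
Round every distance of `d` up to the next multiple of `η`. Since the ceiling is subadditive,
`η ⌈d(x,y)/η⌉` is again a metric; it moves each distance by less than `η`, and distinct
points are at least `η` apart, so it is uniformly discrete and hence generates the discrete
topology.
-/

open Set
open scoped ENNReal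

/-- The space `Met(X)` of metrics generating the topology of `X`. -/
def MetricCompat (X : Type*) [t : TopologicalSpace X] : Type _ :=
  { m : MetricSpace X // m.toUniformSpace.toTopologicalSpace = t }

namespace MetricCompat

variable {X : Type*} [TopologicalSpace X]

/-- The distance function of an element of `Met(X)`. -/
noncomputable def dist (d : MetricCompat X) (x y : X) : ℝ := d.1.dist x y

/-- The supremum distance `D_X`, valued in `[0,∞]`. -/
noncomputable def supDist (d e : MetricCompat X) : ℝ≥0∞ :=
  ⨆ p : X × X, ENNReal.ofReal |d.dist p.1 p.2 - e.dist p.1 p.2|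

/-- The topology on `Met(X)` induced by the open balls of `D_X`. -/
noncomputable instance : TopologicalSpace (MetricCompat X) :=
  TopologicalSpace.generateFrom
    { U | ∃ (d : MetricCompat X) (r : ℝ≥0∞), 0 < r ∧ U = { e | supDist d e < r } }

end MetricCompat

/-- A space is strongly `0`-dimensional if disjoint closed sets are separated by a clopen set. -/
def StronglyZeroDim (X : Type*) [TopologicalSpace X] : Prop :=
  ∀ A B : Set X, IsClosed A → IsClosed B → Disjoint A B →
    ∃ V : Set X, IsClopen V ∧ A ⊆ V ∧ Disjoint V B

namespace Metric

section PseudoMetric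

variable {α : Type*} [PseudoMetricSpace α] {η : ℝ}

noncomputable def ceilDist (η : ℝ) (x y : α) : ℝ := η * ⌈dist x y / η⌉₊

@[simp]
theorem ceilDist_self (η : ℝ) (x : α) : ceilDist η x x = 0 := by
  simp [ceilDist]

theorem ceilDist_comm (η : ℝ) (x y : α) : ceilDist η x y = ceilDist η y x := by
  rw [ceilDist, ceilDist, dist_comm]

theorem ceilDist_triangle (hη : 0 ≤ η) (x y z : α) :
    ceilDist η x z ≤ ceilDist η x y + ceilDist η y z := by
  rw [ceilDist, ceilDist, ceilDist, ← mul_add]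
  gcongr
  calc (⌈dist x z / η⌉₊ : ℝ) ≤ ⌈dist x y / η + dist y z / η⌉₊ := by
        gcongr
        rw [← add_div]
        gcongr
        exact dist_triangle x y z
    _ ≤ ⌈dist x y / η⌉₊ + ⌈dist y z / η⌉₊ := by exact_mod_cast Nat.ceil_add_le _ _

theorem dist_le_ceilDist (hη : 0 < η) (x y : α) : dist x y ≤ ceilDist η x y := by
  rw [ceilDist, ← div_le_iff₀' hη]
  exact Nat.le_ceil _

theorem ceilDist_lt_dist_add (hη : 0 < η) (x y : α) : ceilDist η x y < dist x y + η := by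
  have hceil : (⌈dist x y / η⌉₊ : ℝ) < dist x y / η + 1 :=
    Nat.ceil_lt_add_one (div_nonneg dist_nonneg hη.le)
  calc ceilDist η x y < η * (dist x y / η + 1) := mul_lt_mul_of_pos_left hceil hη
    _ = dist x y + η := by field_simp

theorem abs_dist_sub_ceilDist_le (hη : 0 < η) (x y : α) : |dist x y - ceilDist η x y| ≤ η :=
  abs_sub_le_iff.2
    ⟨by linarith [dist_le_ceilDist hη x y], by linarith [ceilDist_lt_dist_add hη x y]⟩

end PseudoMetric

section MetricSpace

variable {α : Type*} [MetricSpace α] {η : ℝ}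

theorem le_ceilDist_of_ne (hη : 0 < η) {x y : α} (hxy : x ≠ y) : η ≤ ceilDist η x y := by
  have hceil : 1 ≤ ⌈dist x y / η⌉₊ := Nat.one_le_ceil_iff.2 (div_pos (dist_pos.2 hxy) hη)
  calc η = η * (1 : ℕ) := by simp
    _ ≤ ceilDist η x y := by unfold ceilDist; gcongr

variable (η) in
/-- The metric `ceilDist η`; it is not an instance, since `α` already carries a metric. -/
@[reducible]
noncomputable def ceilMetric (hη : 0 < η) : MetricSpace α where
  dist := ceilDist η
  dist_self := ceilDist_self η
  dist_comm := ceilDist_comm η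
  dist_triangle := ceilDist_triangle hη.le
  eq_of_dist_eq_zero {x y} h := by
    by_contra hxy
    exact (le_ceilDist_of_ne hη hxy).not_gt (h ▸ hη)

theorem ceilMetric_uniformSpace_eq_bot (hη : 0 < η) :
    (ceilMetric η hη : MetricSpace α).toUniformSpace = ⊥ :=
  (@Metric.uniformSpace_eq_bot α (ceilMetric η hη).toPseudoMetricSpace).2
    ⟨η, hη, fun _ _ hxy => le_ceilDist_of_ne hη hxy⟩

end MetricSpace

end Metric

open Metric in
theorem discrete_approx_by_eta_integer_valued_metric
    {X : Type*} [TopologicalSpace X] [DiscreteTopology X]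
    (η : ℝ) (hη : 0 < η) (d : MetricCompat X) :
    ∃ e : MetricCompat X,
      (⨆ p : X × X, ENNReal.ofReal |d.dist p.1 p.2 - e.dist p.1 p.2|) ≤ ENNReal.ofReal η ∧
      ∀ x y : X, x ≠ y → (∃ n : ℕ, e.dist x y = η * n) ∧ η ≤ e.dist x y := by
  let _ : MetricSpace X := d.1
  have hcompat : (ceilMetric η hη : MetricSpace X).toUniformSpace.toTopologicalSpace =
      ‹TopologicalSpace X› := by
    rw [ceilMetric_uniformSpace_eq_bot, UniformSpace.toTopologicalSpace_bot,
      DiscreteTopology.eq_bot (α := X)]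
  refine ⟨⟨ceilMetric η hη, hcompat⟩, ?_,
    fun x y hxy => ⟨⟨_, rfl⟩, le_ceilDist_of_ne hη hxy⟩⟩
  exact iSup_le fun p => ENNReal.ofReal_le_ofReal (abs_dist_sub_ceilDist_le hη p.1 p.2)
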